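/- arXiv:2303.01401 — 3 statements merged into one kernel-verified Lean document; each statement's English description precedes it below -/
import Mathlib

section
/- Let a, b > 0 and p > 1, and let H(x) = a·x for x ≥ 0, H(x) = -b·x for x < 0. Then x ↦ H(x)ᵖ is strictly convex on ℝ. -/
/-- For `a, b > 0`, `p > 1` and `H(x) = a·x` for `x ≥ 0`, `H(x) = -b·x` for `x < 0`,
the function `x ↦ H(x)ᵖ` is strictly convex on `ℝ`. -/
theorem stmt_4 (a b p : ℝ) (ha : 0 < a) (hb : 0 < b) (hp : 1 < p)
    (H : ℝ → ℝ)
    (hH : ∀ x : ℝ, H x = if 0 ≤ x then a * x else -b * x) :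
    StrictConvexOn ℝ Set.univ (fun x => H x ^ p) := by
  have hmax : ∀ x : ℝ, H x = max (a * x) (-b * x) := by
    intro x
    rcases le_or_gt 0 x with hx | hx
    · rw [hH x, if_pos hx, eq_comm, max_eq_left]; nlinarith
    · rw [hH x, if_neg (not_le.mpr hx), eq_comm, max_eq_right]; nlinarith
  have hHnn : ∀ x : ℝ, 0 ≤ H x := by
    intro x
    rw [hmax]
    rcases le_or_gt 0 x with hx | hx
    · exact le_max_of_le_left (by positivity)
    · exact le_max_of_le_right (by nlinarith)
  constructor
  · exact convex_univ
  · intro x _ y _ hxy t s ht hs hts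
    simp only [smul_eq_mul]
    have hax : a * x ≤ H x := hmax x ▸ le_max_left _ _
    have hbx : -b * x ≤ H x := hmax x ▸ le_max_right _ _
    have hay : a * y ≤ H y := hmax y ▸ le_max_left _ _
    have hby : -b * y ≤ H y := hmax y ▸ le_max_right _ _
    have hconv : H (t * x + s * y) ≤ t * H x + s * H y := by
      rw [hmax]
      apply max_le <;> [nlinarith; nlinarith]
    by_cases hH' : H x = H y
    · -- x ≠ y forces strict inequality in the kink
      have hstrict : H (t * x + s * y) < t * H x + s * H y := by
        -- exactly one of x, y is negative
        rcases le_or_gt 0 x with hx0 | hx0 <;> rcases le_or_gt 0 y with hy0 | hy0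
        · exfalso; apply hxy
          have hx := hH x; have hy := hH y
          rw [if_pos hx0] at hx; rw [if_pos hy0] at hy
          have : a * x = a * y := by rw [← hx, ← hy, hH']
          exact mul_left_cancel₀ (ne_of_gt ha) this
        · -- 0 ≤ x, y < 0
          have haxe : a * x = H x := by rw [hH x, if_pos hx0]
          have hbye : -b * y = H y := by rw [hH y, if_neg (not_le.mpr hy0)]
          have hx0' : 0 < x := by
            rcases lt_or_eq_of_le hx0 with h | h
            · exact h
            · exfalso; have : H y = 0 := by rw [← hH', ← haxe, ← h]; ring
              nlinarith
          have h1 : -b * x < H x := by nlinarith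
          have h2 : a * y < H y := by nlinarith
          rw [hmax]
          apply max_lt <;> [nlinarith; nlinarith]
        · -- x < 0, 0 ≤ y
          have hbxe : -b * x = H x := by rw [hH x, if_neg (not_le.mpr hx0)]
          have haye : a * y = H y := by rw [hH y, if_pos hy0]
          have hy0' : 0 < y := by
            rcases lt_or_eq_of_le hy0 with h | h
            · exact h
            · exfalso; have : H x = 0 := by rw [hH', ← haye, ← h]; ring
              nlinarith
          have h1 : a * x < H x := by nlinarith
          have h2 : -b * y < H y := by nlinarith
          rw [hmax]
          apply max_lt <;> [nlinarith; nlinarith]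
        · exfalso; apply hxy
          have hx := hH x; have hy := hH y
          rw [if_neg (not_le.mpr hx0)] at hx; rw [if_neg (not_le.mpr hy0)] at hy
          have : -b * x = -b * y := by rw [← hx, ← hy, hH']
          have := mul_left_cancel₀ (show (-b : ℝ) ≠ 0 by linarith) this
          exact this
      have hlt := Real.rpow_lt_rpow (hHnn _) hstrict (show (0:ℝ) < p by linarith)
      calc H (t * x + s * y) ^ p < (t * H x + s * H y) ^ p := hlt
        _ = t * H x ^ p + s * H y ^ p := by
            rw [hH']
            have h1 : t * H y + s * H y = H y := by
              have : t * H y + s * H y = (t + s) * H y := by ring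
              rw [this, hts, one_mul]
            have h2 : t * H y ^ p + s * H y ^ p = H y ^ p := by
              have : t * H y ^ p + s * H y ^ p = (t + s) * H y ^ p := by ring
              rw [this, hts, one_mul]
            rw [h1, h2]
    · have hlt := strictConvexOn_rpow hp |>.2 (Set.mem_Ici.mpr (hHnn x))
        (Set.mem_Ici.mpr (hHnn y)) hH' ht hs hts
      have hle : H (t * x + s * y) ^ p ≤ (t * H x + s * H y) ^ p := by
        apply Real.rpow_le_rpow (hHnn _) hconv (by linarith : (0:ℝ) ≤ p)
      calc H (t * x + s * y) ^ p ≤ (t * H x + s * H y) ^ p := hle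
        _ < t * H x ^ p + s * H y ^ p := by simpa using hlt
end

section
/- Let a, b > 0, p > 1, n ≥ 2 an even natural number, and r₁, …, r_n > 0. Set α_j = r_j / (r₁ + ⋯ + r_n) and S = r₁ + ⋯ + r_n. Then ∑_{j odd} α_j·aᵖ·r_j^{-p} + ∑_{j even} α_j·bᵖ·r_j^{-p} ≥ ((n/2)·(a+b))ᵖ·S^{-p}, and since ((n/2)·(a+b))ᵖ ≥ (a+b)ᵖ, the left-hand side is ≥ (a+b)ᵖ·S^{-p}. -/
open scoped BigOperators

open Finset Real

open scoped BigOperators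

lemma card_odd_even (m : ℕ) :
    (((Icc 1 (2*m)).filter (fun j => Odd j)).card = m) ∧
    (((Icc 1 (2*m)).filter (fun j => Even j)).card = m) := by
  induction m with
  | zero => simp
  | succ m ih =>
    have h1 : Icc 1 (2*(m+1)) = insert (2*m+2) (insert (2*m+1) (Icc 1 (2*m))) := by
      ext x; simp [Finset.mem_Icc]; omega
    constructor <;>
    · rw [h1, Finset.filter_insert, Finset.filter_insert]
      simp [Nat.even_add_one, Nat.odd_add_one, parity_simps]
      first
      | (rw [Finset.card_insert_of_not_mem (by simp [Finset.mem_filter]; omega)]; omega)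
      | omega


/-- Key convexity estimate in the anisotropic Polya inequality: for `a, b > 0`, `p > 1`,
`n ≥ 2` even and positive `r_j` with `S = ∑ r_j`, `α_j = r_j/S`, one has
`∑_{j odd} α_j aᵖ r_j^{-p} + ∑_{j even} α_j bᵖ r_j^{-p} ≥ ((n/2)(a+b))ᵖ S^{-p}`
and `((n/2)(a+b))ᵖ ≥ (a+b)ᵖ`, hence the left-hand side is `≥ (a+b)ᵖ S^{-p}`. -/
theorem stmt_7 (a b p : ℝ) (ha : 0 < a) (hb : 0 < b) (hp : 1 < p)
    (n : ℕ) (hn : 2 ≤ n) (hne : Even n)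
    (r : ℕ → ℝ) (hr : ∀ j ∈ Finset.Icc 1 n, 0 < r j)
    (S : ℝ) (hS : S = ∑ j ∈ Finset.Icc 1 n, r j)
    (α : ℕ → ℝ) (hα : ∀ j, α j = r j / S) :
    (((n : ℝ) / 2 * (a + b)) ^ p * S ^ (-p) ≤
      ∑ j ∈ (Finset.Icc 1 n).filter (fun j => Odd j), α j * (a ^ p * r j ^ (-p)) +
      ∑ j ∈ (Finset.Icc 1 n).filter (fun j => Even j), α j * (b ^ p * r j ^ (-p))) ∧
    ((a + b) ^ p ≤ ((n : ℝ) / 2 * (a + b)) ^ p) ∧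
    ((a + b) ^ p * S ^ (-p) ≤
      ∑ j ∈ (Finset.Icc 1 n).filter (fun j => Odd j), α j * (a ^ p * r j ^ (-p)) +
      ∑ j ∈ (Finset.Icc 1 n).filter (fun j => Even j), α j * (b ^ p * r j ^ (-p))) := by
  obtain ⟨m, hm⟩ := hne
  have hmn : n = 2 * m := by omega
  have hm1 : 1 ≤ m := by omega
  subst hmn
  have hSpos : 0 < S := by
    rw [hS]
    apply Finset.sum_pos hr
    exact ⟨1, by simp; omega⟩
  set c : ℕ → ℝ := fun j => if Odd j then a else b with hc
  set z : ℕ → ℝ := fun j => c j / r j with hz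
  -- weights
  have hw : ∀ j ∈ Icc 1 (2*m), 0 ≤ α j := fun j hj => by
    have h1 := hr j hj; rw [hα]; positivity
  have hw' : ∑ j ∈ Icc 1 (2*m), α j = 1 := by
    simp only [hα, ← Finset.sum_div, ← hS]
    exact div_self hSpos.ne'
  have hzpos : ∀ j ∈ Icc 1 (2*m), 0 < z j := fun j hj => by
    have := hr j hj
    simp only [hz, hc]
    split_ifs <;> positivity
  -- Jensen
  have jensen := Real.rpow_arith_mean_le_arith_mean_rpow (Icc 1 (2*m)) α z hw hw'
    (fun j hj => (hzpos j hj).le) hp.le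
  -- compute the mean
  have hmean : ∑ j ∈ Icc 1 (2*m), α j * z j = (↑(2*m) : ℝ) / 2 * (a + b) / S := by
    have : ∀ j ∈ Icc 1 (2*m), α j * z j = c j / S := fun j hj => by
      have hrj := hr j hj
      rw [hα, hz]
      field_simp
    rw [Finset.sum_congr rfl this, ← Finset.sum_div]
    have hcsum : ∑ j ∈ Icc 1 (2*m), c j = (m : ℝ) * a + (m : ℝ) * b := by
      rw [← Finset.sum_filter_add_sum_filter_not (Icc 1 (2*m)) (fun j => Odd j)]
      have h1 : ∀ j ∈ (Icc 1 (2*m)).filter (fun j => Odd j), c j = a := fun j hj => by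
        simp only [Finset.mem_filter] at hj; simp [hc, hj.2]
      have h2 : ∀ j ∈ (Icc 1 (2*m)).filter (fun j => ¬ Odd j), c j = b := fun j hj => by
        simp only [Finset.mem_filter] at hj; simp [hc, hj.2]
      rw [Finset.sum_congr rfl h1, Finset.sum_congr rfl h2, Finset.sum_const, Finset.sum_const]
      have hfe : (Icc 1 (2*m)).filter (fun j => ¬ Odd j) = (Icc 1 (2*m)).filter (fun j => Even j) := by
        apply Finset.filter_congr; intro x _; simp [Nat.not_odd_iff_even]
      rw [(card_odd_even m).1]
      rw [hfe, (card_odd_even m).2]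
      simp [nsmul_eq_mul]
    rw [hcsum]
    push_cast
    ring
  -- matching the sums
  have hlhs : ∑ j ∈ Icc 1 (2*m), α j * z j ^ p =
      ∑ j ∈ (Icc 1 (2*m)).filter (fun j => Odd j), α j * (a ^ p * r j ^ (-p)) +
      ∑ j ∈ (Icc 1 (2*m)).filter (fun j => Even j), α j * (b ^ p * r j ^ (-p)) := by
    rw [← Finset.sum_filter_add_sum_filter_not (Icc 1 (2*m)) (fun j => Odd j)]
    have hfe : (Icc 1 (2*m)).filter (fun j => ¬ Odd j) = (Icc 1 (2*m)).filter (fun j => Even j) := by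
      apply Finset.filter_congr; intro x _; simp [Nat.not_odd_iff_even]
    rw [hfe]
    congr 1
    · apply Finset.sum_congr rfl
      intro j hj
      simp only [Finset.mem_filter] at hj
      have hrj := hr j hj.1
      simp only [hz, hc, if_pos hj.2]
      rw [Real.div_rpow ha.le hrj.le, Real.rpow_neg hrj.le, div_eq_mul_inv]
    · apply Finset.sum_congr rfl
      intro j hj
      simp only [Finset.mem_filter] at hj
      have hrj := hr j hj.1
      have hodd : ¬ Odd j := by simp [Nat.not_odd_iff_even]; exact hj.2
      simp only [hz, hc, if_neg hodd]
      rw [Real.div_rpow hb.le hrj.le, Real.rpow_neg hrj.le, div_eq_mul_inv]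
  rw [hmean, hlhs] at jensen
  have habpos : 0 < a + b := by linarith
  have hnhalf : (1:ℝ) ≤ (↑(2*m) : ℝ) / 2 := by
    have : (1:ℝ) ≤ (m:ℝ) := by exact_mod_cast hm1
    push_cast; linarith
  have hform : ((↑(2*m) : ℝ) / 2 * (a + b) / S) ^ p =
      ((↑(2*m) : ℝ) / 2 * (a + b)) ^ p * S ^ (-p) := by
    rw [Real.div_rpow (by positivity) hSpos.le, Real.rpow_neg hSpos.le, div_eq_mul_inv]
  rw [hform] at jensen
  refine ⟨jensen, ?_, ?_⟩
  · apply Real.rpow_le_rpow habpos.le ?_ (by linarith)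
    nlinarith
  · refine le_trans ?_ jensen
    apply mul_le_mul_of_nonneg_right ?_ (by positivity)
    apply Real.rpow_le_rpow habpos.le ?_ (by linarith)
    nlinarith
end

section
/- Let p > 1 and u, U be positive measurable functions on a set Ω, and for t ∈ (0,1) define u_t = (t·uᵖ + (1−t)·Uᵖ)^{1/p}. Let H: ℝᴺ → ℝ be nonnegative, convex and positively 1-homogeneous. If u and U are weakly differentiable, then pointwise H(∇u_t)ᵖ ≤ t·H(∇u)ᵖ + (1−t)·H(∇U)ᵖ wherever u, U > 0. -/
/-- Hidden convexity: for `p > 1`, `t ∈ (0,1)`, positive values `u, U`, gradients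
`gu, gU`, and `H` convex, nonnegative and positively 1-homogeneous, setting
`η = t uᵖ + (1−t) Uᵖ`, the gradient of `u_t = η^{1/p}` satisfies
`H(∇u_t)ᵖ ≤ t H(gu)ᵖ + (1−t) H(gU)ᵖ`. -/
theorem stmt_10 (N : ℕ) (p t : ℝ) (hp : 1 < p) (ht : t ∈ Set.Ioo (0 : ℝ) 1)
    (H : EuclideanSpace ℝ (Fin N) → ℝ)
    (hnonneg : ∀ ξ, 0 ≤ H ξ)
    (hhom : ∀ s : ℝ, 0 ≤ s → ∀ ξ, H (s • ξ) = s * H ξ)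
    (hconv : ConvexOn ℝ Set.univ H)
    (u U : ℝ) (hu : 0 < u) (hU : 0 < U)
    (gu gU : EuclideanSpace ℝ (Fin N))
    (η : ℝ) (hη : η = t * u ^ p + (1 - t) * U ^ p) :
    H (η ^ (1 / p - 1) • ((t * u ^ (p - 1)) • gu + ((1 - t) * U ^ (p - 1)) • gU)) ^ p ≤
      t * H gu ^ p + (1 - t) * H gU ^ p := by
  obtain ⟨ht0, ht1⟩ := ht
  have ht1' : 0 < 1 - t := by linarith
  have hp0 : (0 : ℝ) < p := lt_trans one_pos hp
  have hup : 0 < u ^ p := Real.rpow_pos_of_pos hu p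
  have hUp : 0 < U ^ p := Real.rpow_pos_of_pos hU p
  have hηpos : 0 < η := by rw [hη]; positivity
  set a := H gu with ha'
  set b := H gU with hb'
  have ha : 0 ≤ a := hnonneg _
  have hb : 0 ≤ b := hnonneg _
  set l := t * u ^ p / η with hl'
  set m := (1 - t) * U ^ p / η with hm'
  have hl0 : 0 ≤ l := by positivity
  have hm0 : 0 ≤ m := by positivity
  have hsum : l + m = 1 := by
    rw [hl', hm', ← add_div, hη, div_self (by rw [← hη]; exact hηpos.ne')]
  have hη1p : 0 < η ^ (1 / p) := Real.rpow_pos_of_pos hηpos _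
  set s := l * (a / u) + m * (b / U) with hs'
  have hs0 : 0 ≤ s := by positivity
  -- rewrite the argument as a convex combination
  have hkey : η ^ (1 / p - 1) • ((t * u ^ (p - 1)) • gu + ((1 - t) * U ^ (p - 1)) • gU)
      = l • ((η ^ (1 / p) / u) • gu) + m • ((η ^ (1 / p) / U) • gU) := by
    rw [smul_add, smul_smul, smul_smul, smul_smul, smul_smul]
    congr 1
    · congr 1
      rw [Real.rpow_sub hηpos, Real.rpow_sub hu, Real.rpow_one, Real.rpow_one, hl']
      field_simp
    · congr 1
      rw [Real.rpow_sub hηpos, Real.rpow_sub hU, Real.rpow_one, Real.rpow_one, hm']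
      field_simp
  -- apply convexity and homogeneity of H
  have hH1 : H (η ^ (1 / p - 1) • ((t * u ^ (p - 1)) • gu + ((1 - t) * U ^ (p - 1)) • gU))
      ≤ η ^ (1 / p) * s := by
    rw [hkey]
    calc H (l • ((η ^ (1 / p) / u) • gu) + m • ((η ^ (1 / p) / U) • gU))
        ≤ l * H ((η ^ (1 / p) / u) • gu) + m * H ((η ^ (1 / p) / U) • gU) :=
          hconv.2 (Set.mem_univ _) (Set.mem_univ _) hl0 hm0 hsum
      _ = η ^ (1 / p) * s := by
          rw [hhom _ (by positivity) gu, hhom _ (by positivity) gU, hs', ← ha', ← hb']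
          field_simp
  -- raise to the power p
  have hH2 : H (η ^ (1 / p - 1) • ((t * u ^ (p - 1)) • gu + ((1 - t) * U ^ (p - 1)) • gU)) ^ p
      ≤ (η ^ (1 / p) * s) ^ p :=
    Real.rpow_le_rpow (hnonneg _) hH1 hp0.le
  have hmul : (η ^ (1 / p) * s) ^ p = η * s ^ p := by
    rw [Real.mul_rpow hη1p.le hs0, ← Real.rpow_mul hηpos.le, one_div_mul_cancel hp0.ne',
      Real.rpow_one]
  -- convexity of x ↦ x ^ p
  have hsp : s ^ p ≤ l * (a / u) ^ p + m * (b / U) ^ p := by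
    have := (convexOn_rpow hp.le).2 (x := a / u) (y := b / U)
      (by exact Set.mem_Ici.mpr (by positivity)) (by exact Set.mem_Ici.mpr (by positivity))
      hl0 hm0 hsum
    simpa [hs'] using this
  have hfin : η * (l * (a / u) ^ p + m * (b / U) ^ p) = t * a ^ p + (1 - t) * b ^ p := by
    rw [Real.div_rpow ha hu.le, Real.div_rpow hb hU.le, hl', hm']
    field_simp
  calc H (η ^ (1 / p - 1) • ((t * u ^ (p - 1)) • gu + ((1 - t) * U ^ (p - 1)) • gU)) ^ p
      ≤ (η ^ (1 / p) * s) ^ p := hH2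
    _ = η * s ^ p := hmul
    _ ≤ η * (l * (a / u) ^ p + m * (b / U) ^ p) := by
        exact mul_le_mul_of_nonneg_left hsp hηpos.le
    _ = t * a ^ p + (1 - t) * b ^ p := hfin
end
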